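/- Let M be a symmetric n×n integer matrix with all diagonal entries even, whose quadratic enhancement is proper (q_M(v) ≡ 0 (mod 4) for every v in the kernel of M mod 2), and let k be the ℤ/2-dimension of that kernel. Then the Monsky sum is real and equals ±(√2)^{n+k}: there exists ε ∈ {1, −1} with λ(M) = ε·(√2)^{n+k}. (Equivalently, the Brown invariant of φ_M lies in {0, 4} ⊂ ℤ/8 and equals 4·Arf(q), where q = φ_M/2 is the associated ordinary ℤ/2 quadratic form.) -/
import Mathlib


open Matrix

/-- The `{0,1}`-valued integer lift of a mod-2 vector. -/
def zlift {ι : Type*} (v : ι → ZMod 2) : ι → ℤ := fun i => ((v i).val : ℤ)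

/-- The integral quadratic form `q_M(v) = ṽᵀ M ṽ` evaluated on the `{0,1}` lift of `v`. -/
def qForm {ι : Type*} [Fintype ι] (M : Matrix ι ι ℤ) (v : ι → ZMod 2) : ℤ :=
  ∑ i, ∑ j, zlift v i * M i j * zlift v j

/-- The Monsky sum `λ(M) = Σ_{v ∈ (ℤ/2)ⁿ} i^{q_M(v)}`. -/
noncomputable def monsky {ι : Type*} [Fintype ι] [DecidableEq ι] (M : Matrix ι ι ℤ) : ℂ :=
  ∑ v : ι → ZMod 2, Complex.I ^ qForm M v

-- helpers
lemma qForm_eq {n : ℕ} (M : Matrix (Fin n) (Fin n) ℤ) (v : Fin n → ZMod 2) :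
    qForm M v = zlift v ⬝ᵥ M.mulVec (zlift v) := by
  simp [qForm, dotProduct, Matrix.mulVec, Finset.mul_sum, mul_assoc]

lemma zlift_cast {n : ℕ} (v : Fin n → ZMod 2) (i : Fin n) :
    ((zlift v i : ℤ) : ZMod 2) = v i := by
  simp [zlift, ZMod.intCast_cast]

lemma zlift_add {n : ℕ} (v w : Fin n → ZMod 2) :
    zlift (v + w) = zlift v + zlift w - 2 • (zlift v * zlift w) := by
  funext i
  have h : ∀ a b : ZMod 2, (((a + b).val : ℤ)) = (a.val : ℤ) + b.val - 2 • ((a.val : ℤ) * b.val) := by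
    decide
  simpa [zlift] using h (v i) (w i)

lemma dot_symm {n : ℕ} {M : Matrix (Fin n) (Fin n) ℤ} (hM : M.IsSymm)
    (x y : Fin n → ℤ) : x ⬝ᵥ M.mulVec y = y ⬝ᵥ M.mulVec x := by
  rw [Matrix.dotProduct_mulVec, ← Matrix.mulVec_transpose, hM.eq, dotProduct_comm]

lemma qForm_add {n : ℕ} {M : Matrix (Fin n) (Fin n) ℤ} (hM : M.IsSymm)
    (v w : Fin n → ZMod 2) :
    ∃ t : ℤ, qForm M (v + w)
      = qForm M v + qForm M w + 2 * (zlift v ⬝ᵥ M.mulVec (zlift w)) + 4 * t := by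
  set b := zlift v
  set c := zlift w
  set d := b * c with hd
  refine ⟨d ⬝ᵥ M.mulVec d - b ⬝ᵥ M.mulVec d - c ⬝ᵥ M.mulVec d, ?_⟩
  rw [qForm_eq, qForm_eq, qForm_eq, zlift_add v w]
  simp only [Matrix.mulVec_sub, Matrix.mulVec_add, Matrix.mulVec_smul,
    sub_dotProduct, add_dotProduct, dotProduct_sub,
    dotProduct_add, dotProduct_smul, smul_dotProduct,
    smul_eq_mul, ← hd]
  rw [dot_symm hM c b, dot_symm hM d b, dot_symm hM d c]
  ring

lemma qForm_even {n : ℕ} {M : Matrix (Fin n) (Fin n) ℤ} (hM : M.IsSymm)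
    (heven : ∀ i, Even (M i i)) (v : Fin n → ZMod 2) : Even (qForm M v) := by
  rw [even_iff_two_dvd, show (2:ℤ) = ((2:ℕ):ℤ) by norm_num,
    ← ZMod.intCast_zmod_eq_zero_iff_dvd]
  have hcast : ((qForm M v : ℤ) : ZMod 2)
      = ∑ p ∈ (Finset.univ ×ˢ Finset.univ : Finset (Fin n × Fin n)),
          (v p.1) * ((M p.1 p.2 : ℤ) : ZMod 2) * (v p.2) := by
    rw [qForm, ← Finset.sum_product']
    push_cast
    refine Finset.sum_congr rfl fun p _ => ?_
    rw [zlift_cast, zlift_cast]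
  rw [hcast]
  set f : Fin n × Fin n → ZMod 2 := fun p => (v p.1) * ((M p.1 p.2 : ℤ) : ZMod 2) * (v p.2)
    with hf
  have hsplit : (Finset.univ ×ˢ Finset.univ : Finset (Fin n × Fin n))
      = (Finset.univ ×ˢ Finset.univ).filter (fun p => p.1 = p.2)
        ∪ (Finset.univ ×ˢ Finset.univ).filter (fun p => ¬ p.1 = p.2) := by
    simp [Finset.filter_union_filter_not_eq]
  rw [hsplit, Finset.sum_union (Finset.disjoint_filter_filter_not _ _ _)]
  have h1 : ∑ p ∈ (Finset.univ ×ˢ Finset.univ).filter (fun p => p.1 = p.2), f p = 0 := by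
    refine Finset.sum_eq_zero fun p hp => ?_
    have hpe : p.1 = p.2 := (Finset.mem_filter.mp hp).2
    have : ((M p.1 p.2 : ℤ) : ZMod 2) = 0 := by
      rw [ZMod.intCast_zmod_eq_zero_iff_dvd, show ((2:ℕ):ℤ) = 2 by norm_num,
        ← even_iff_two_dvd, ← hpe]
      exact heven p.1
    simp [hf, this]
  have h2 : ∑ p ∈ (Finset.univ ×ˢ Finset.univ).filter (fun p => ¬ p.1 = p.2), f p = 0 := by
    refine Finset.sum_involution (fun p _ => (p.2, p.1)) ?_ ?_ ?_ ?_
    · intro p _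
      have hsym : M p.2 p.1 = M p.1 p.2 := (hM.apply p.1 p.2)
      have hfp : f (p.2, p.1) = f p := by simp only [hf, hsym]; ring
      rw [hfp]
      exact CharTwo.add_self_eq_zero (f p)
    · intro p hp _
      intro h
      have h1 : p.2 = p.1 := congrArg Prod.fst h
      exact (Finset.mem_filter.mp hp).2 h1.symm
    · intro p hp
      have hp' := Finset.mem_filter.mp hp
      refine Finset.mem_filter.mpr ⟨Finset.mem_product.mpr ⟨Finset.mem_univ _, Finset.mem_univ _⟩, ?_⟩
      exact fun h => hp'.2 h.symm
    · intro p _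
      rfl
  rw [h1, h2, add_zero]

lemma I_zpow_congr {a b : ℤ} (h : (4:ℤ) ∣ a - b) : Complex.I ^ a = Complex.I ^ b := by
  obtain ⟨t, ht⟩ := h
  have ha : a = b + 4 * t := by linarith
  rw [ha, zpow_add₀ Complex.I_ne_zero, _root_.zpow_mul,
    show ((4:ℤ)) = ((4:ℕ):ℤ) from rfl, zpow_natCast, Complex.I_pow_four, _root_.one_zpow, mul_one]

lemma neg_one_zpow_sum {α : Type*} (s : Finset α) (f : α → ℤ) :
    (-1:ℂ) ^ (∑ x ∈ s, f x) = ∏ x ∈ s, (-1:ℂ) ^ (f x) := by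
  induction s using Finset.cons_induction with
  | empty => simp
  | cons a s ha ih =>
    rw [Finset.sum_cons, Finset.prod_cons, zpow_add₀ (by norm_num : (-1:ℂ) ≠ 0), ih]

lemma sum_zmod_two (g : ZMod 2 → ℂ) : ∑ t : ZMod 2, g t = g 0 + g 1 := Fin.sum_univ_two g

lemma monskyInnerSum {n : ℕ} (m : Fin n → ℤ) :
    ∑ v : Fin n → ZMod 2, (-1:ℂ) ^ (zlift v ⬝ᵥ m) = ∏ i, (1 + (-1:ℂ) ^ (m i)) := by
  have key : ∀ i : Fin n, ∑ t : ZMod 2, (-1:ℂ) ^ (((t.val : ℤ)) * m i)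
      = 1 + (-1:ℂ) ^ (m i) := by
    intro i
    rw [sum_zmod_two]
    have h0 : (((0 : ZMod 2).val : ℤ)) = 0 := by decide
    have h1 : (((1 : ZMod 2).val : ℤ)) = 1 := by decide
    rw [h0, h1, zero_mul, one_mul, zpow_zero]
  calc ∑ v : Fin n → ZMod 2, (-1:ℂ) ^ (zlift v ⬝ᵥ m)
      = ∑ v : Fin n → ZMod 2, ∏ i, (-1:ℂ) ^ ((( (v i).val : ℤ)) * m i) := by
        refine Finset.sum_congr rfl fun v _ => ?_
        rw [dotProduct, neg_one_zpow_sum]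
        rfl
    _ = ∏ i, ∑ t : ZMod 2, (-1:ℂ) ^ (((t.val : ℤ)) * m i) := by
        rw [Finset.prod_univ_sum, ← Fintype.piFinset_univ]
    _ = ∏ i, (1 + (-1:ℂ) ^ (m i)) := Finset.prod_congr rfl fun i _ => key i

lemma prod_factor {n : ℕ} (m : Fin n → ℤ) [DecidablePred fun i : Fin n => Even (m i)] :
    ∏ i, (1 + (-1:ℂ) ^ (m i)) = if ∀ i, Even (m i) then (2:ℂ)^n else 0 := by
  by_cases h : ∀ i, Even (m i)
  · rw [if_pos h]
    have : ∀ i : Fin n, (1 + (-1:ℂ) ^ (m i)) = 2 := by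
      intro i; rw [(h i).neg_one_zpow]; norm_num
    rw [Finset.prod_congr rfl fun i _ => this i, Finset.prod_const, Finset.card_univ,
      Fintype.card_fin]
  · rw [if_neg h]
    push_neg at h
    obtain ⟨i, hi⟩ := h
    refine Finset.prod_eq_zero (Finset.mem_univ i) ?_
    rw [(Int.not_even_iff_odd.mp hi).neg_one_zpow]
    ring

lemma mulVec_cast {n : ℕ} (M : Matrix (Fin n) (Fin n) ℤ) (u : Fin n → ZMod 2) (i : Fin n) :
    (((M.mulVec (zlift u)) i : ℤ) : ZMod 2) = (M.map (Int.cast : ℤ → ZMod 2)).mulVec u i := by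
  rw [Matrix.mulVec, Matrix.mulVec, dotProduct, dotProduct]
  push_cast
  exact Finset.sum_congr rfl fun j _ => by rw [Matrix.map_apply, zlift_cast]

lemma ker_iff {n : ℕ} (M : Matrix (Fin n) (Fin n) ℤ) (u : Fin n → ZMod 2) :
    (M.map (Int.cast : ℤ → ZMod 2)).mulVec u = 0 ↔ ∀ i, Even (M.mulVec (zlift u) i) := by
  rw [funext_iff]
  refine forall_congr' fun i => ?_
  rw [← mulVec_cast, Pi.zero_apply, ZMod.intCast_zmod_eq_zero_iff_dvd,
    show ((2:ℕ):ℤ) = 2 from rfl, ← even_iff_two_dvd]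

lemma monsky_sq {n : ℕ} (M : Matrix (Fin n) (Fin n) ℤ) (hM : M.IsSymm)
    (heven : ∀ i, Even (M i i))
    (hproper : ∀ v : Fin n → ZMod 2,
      (M.map (Int.cast : ℤ → ZMod 2)).mulVec v = 0 → ((qForm M v : ℤ) : ZMod 4) = 0) :
    monsky M ^ 2 = (2:ℂ) ^ n * (Finset.univ.filter
      (fun u : Fin n → ZMod 2 =>
        (M.map (Int.cast : ℤ → ZMod 2)).mulVec u = 0)).card := by
  classical
  have hI2 : Complex.I ^ (2:ℤ) = -1 := by
    rw [show (2:ℤ) = ((2:ℕ):ℤ) from rfl, zpow_natCast, Complex.I_sq]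
  have step1 : monsky M ^ 2
      = ∑ v : Fin n → ZMod 2, ∑ u : Fin n → ZMod 2,
          Complex.I ^ qForm M u * (-1:ℂ) ^ (zlift v ⬝ᵥ M.mulVec (zlift u)) := by
    rw [sq, monsky, Finset.sum_mul_sum]
    refine Finset.sum_congr rfl fun v _ => ?_
    rw [← Equiv.sum_comp (Equiv.addLeft v)
      (fun w => Complex.I ^ qForm M v * Complex.I ^ qForm M w)]
    refine Finset.sum_congr rfl fun u _ => ?_
    obtain ⟨t, ht⟩ := qForm_add hM v u
    have hvu : Equiv.addLeft v u = v + u := rfl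
    rw [hvu, ← zpow_add₀ Complex.I_ne_zero, ht]
    have hcong : Complex.I ^ (qForm M v + (qForm M v + qForm M u
          + 2 * (zlift v ⬝ᵥ M.mulVec (zlift u)) + 4 * t))
        = Complex.I ^ (qForm M u + 2 * (zlift v ⬝ᵥ M.mulVec (zlift u))
          + 2 * qForm M v) := by
      refine I_zpow_congr ⟨t, by ring⟩
    rw [hcong, zpow_add₀ Complex.I_ne_zero, zpow_add₀ Complex.I_ne_zero,
      _root_.zpow_mul, _root_.zpow_mul, hI2,
      (qForm_even hM heven v).neg_one_zpow, mul_one]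
  rw [step1, Finset.sum_comm]
  have step2 : ∀ u : Fin n → ZMod 2,
      ∑ v : Fin n → ZMod 2,
        Complex.I ^ qForm M u * (-1:ℂ) ^ (zlift v ⬝ᵥ M.mulVec (zlift u))
      = if (M.map (Int.cast : ℤ → ZMod 2)).mulVec u = 0 then (2:ℂ)^n else 0 := by
    intro u
    rw [← Finset.mul_sum, monskyInnerSum, prod_factor,
      if_congr (ker_iff M u).symm rfl rfl]
    by_cases hc : (M.map (Int.cast : ℤ → ZMod 2)).mulVec u = 0
    · rw [if_pos hc]
      have hdvd : (4:ℤ) ∣ qForm M u - 0 := by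
        rw [sub_zero]
        have := hproper u hc
        rwa [ZMod.intCast_zmod_eq_zero_iff_dvd, show ((4:ℕ):ℤ) = 4 from rfl] at this
      rw [I_zpow_congr hdvd, zpow_zero, one_mul]
    · rw [if_neg hc, mul_zero]
  rw [Finset.sum_congr rfl fun u _ => step2 u, ← Finset.sum_filter,
    Finset.sum_const, nsmul_eq_mul, mul_comm]

/-- If `M` is a symmetric integer matrix with even diagonal whose quadratic
enhancement is proper, and `k` is the `ℤ/2`-dimension of the kernel of `M` mod 2, then the
Monsky sum is real and equals `±(√2)^(n+k)`. (Equivalently, the Brown invariant lies in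
`{0, 4} ⊂ ℤ/8` and equals `4·Arf(q)`.) -/
theorem monsky_of_even_proper {n : ℕ} (M : Matrix (Fin n) (Fin n) ℤ) (hM : M.IsSymm)
    (heven : ∀ i, Even (M i i))
    (hproper : ∀ v : Fin n → ZMod 2,
      (M.map (Int.cast : ℤ → ZMod 2)).mulVec v = 0 → ((qForm M v : ℤ) : ZMod 4) = 0)
    (k : ℕ)
    (hk : k = Module.finrank (ZMod 2)
      (LinearMap.ker (Matrix.mulVecLin (M.map (Int.cast : ℤ → ZMod 2))))) :
    ∃ ε : ℝ, (ε = 1 ∨ ε = -1) ∧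
      monsky M = (ε : ℂ) * ((Real.sqrt 2 : ℝ) : ℂ) ^ (n + k) := by
  classical
  have hconj : (starRingEnd ℂ) (monsky M) = monsky M := by
    rw [monsky, map_sum]
    refine Finset.sum_congr rfl fun v _ => ?_
    rw [map_zpow₀, Complex.conj_I, show (-Complex.I) = (-1) * Complex.I by ring,
      mul_zpow, (qForm_even hM heven v).neg_one_zpow, one_mul]
  have hre : monsky M = ((monsky M).re : ℂ) := (Complex.conj_eq_iff_re.mp hconj).symm
  have hcard : (Finset.univ.filter (fun u : Fin n → ZMod 2 =>
      (M.map (Int.cast : ℤ → ZMod 2)).mulVec u = 0)).card = 2 ^ k := by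
    have e : {u : Fin n → ZMod 2 // (M.map (Int.cast : ℤ → ZMod 2)).mulVec u = 0}
        ≃ LinearMap.ker (Matrix.mulVecLin (M.map (Int.cast : ℤ → ZMod 2))) :=
      Equiv.subtypeEquivRight fun u => by
        simp [LinearMap.mem_ker, Matrix.mulVecLin_apply]
    rw [← Fintype.card_subtype, Fintype.card_congr e,
      Module.card_eq_pow_finrank (K := ZMod 2), ZMod.card, ← hk]
  have hsq : monsky M ^ 2 = (2:ℂ) ^ (n + k) := by
    rw [monsky_sq M hM heven hproper, hcard, pow_add]
    push_cast
    ring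
  set r : ℝ := (monsky M).re with hrdef
  set s : ℝ := Real.sqrt 2 ^ (n + k) with hsdef
  have hr2 : r ^ 2 = 2 ^ (n + k) := by
    have h1 : ((r:ℂ))^2 = ((2:ℝ):ℂ)^(n+k) := by
      rw [← hre]
      exact_mod_cast hsq
    exact_mod_cast h1
  have hs2 : s ^ 2 = 2 ^ (n + k) := by
    rw [hsdef, ← pow_mul, mul_comm, pow_mul, Real.sq_sqrt (by norm_num : (0:ℝ) ≤ 2)]
  have hcases : r = s ∨ r = -s := by
    have h : (r - s) * (r + s) = 0 := by nlinarith [hr2, hs2]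
    rcases mul_eq_zero.mp h with h' | h'
    · left; linarith
    · right; linarith
  rcases hcases with h | h
  · refine ⟨1, Or.inl rfl, ?_⟩
    rw [hre, h, hsdef]
    push_cast
    ring
  · refine ⟨-1, Or.inr rfl, ?_⟩
    rw [hre, h, hsdef]
    push_cast
    ring
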